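/- Let S be a locally compact Hausdorff space and X = C₀(S) the Banach space of continuous complex functions vanishing at infinity with the sup norm, whose pseudohyperbolic distance for x, y in the open unit ball is ρ_X(x,y) = sup_{t ∈ S} ρ(x(t), y(t)) with ρ the disk pseudohyperbolic distance. If x, y are in the open unit ball of X with max(‖x‖,‖y‖) > 0 and z ∈ ℂ satisfies |z| ≤ (1+max(‖x‖,‖y‖))/(2 max(‖x‖,‖y‖)), then zx, zy lie in the open unit ball and ρ_X(zx, zy) ≤ 2|z| ρ_X(x,y). -/

import Mathlib

/-- The pseudohyperbolic distance on the open unit disk. -/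
noncomputable def pseudoDist (a b : ℂ) : ℝ :=
  ‖(a - b) / (1 - (starRingEnd ℂ) a * b)‖

/-!
The estimate is pointwise in `t`: the bound `2 ‖z‖ m ≤ 1 + m` at `m = max ‖x‖ ‖y‖` persists
at every smaller level `max ‖x t‖ ‖y t‖`. Pointwise, with `w = conj a * b` and `L = ‖λ‖`,
`ρ(λa, λb) / ρ(a, b) = L ‖1 - w‖ / ‖1 - L² w‖`, and
`‖1 - w‖ ≤ ‖1 - L² w‖ + |L² - 1| ‖w‖ ≤ 2 ‖1 - L² w‖`, since `|L² - 1| ‖w‖ ≤ 1 - L² ‖w‖`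
amounts to `‖w‖ ≤ 1` when `L ≤ 1` and to `(2 L² - 1) ‖w‖ ≤ 1` when `L > 1`.
-/

open Complex ComplexConjugate

theorem ZeroAtInftyContinuousMap.norm_apply_le {α β : Type*} [TopologicalSpace α]
    [SeminormedAddCommGroup β] (f : ZeroAtInftyContinuousMap α β) (t : α) : ‖f t‖ ≤ ‖f‖ :=
  f.norm_toBCF_eq_norm ▸ f.toBCF.norm_coe_le_norm t

theorem pseudoDist_nonneg (a b : ℂ) : 0 ≤ pseudoDist a b :=
  norm_nonneg _

theorem pseudoDist_eq (a b : ℂ) :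
    pseudoDist a b = ‖a - b‖ / ‖1 - conj a * b‖ :=
  norm_div _ _

theorem normSq_one_sub_conj_mul_sub_normSq_sub (a b : ℂ) :
    normSq (1 - conj a * b) - normSq (a - b) = (1 - normSq a) * (1 - normSq b) := by
  simp only [normSq_apply, sub_re, sub_im, mul_re, mul_im, conj_re, conj_im, one_re, one_im]
  ring

theorem pseudoDist_le_one {a b : ℂ} (ha : ‖a‖ ≤ 1) (hb : ‖b‖ ≤ 1) : pseudoDist a b ≤ 1 := by
  have hnormSq : normSq (a - b) ≤ normSq (1 - conj a * b) := by
    have := normSq_one_sub_conj_mul_sub_normSq_sub a b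
    have ha' : normSq a ≤ 1 := by rw [← norm_mul_self_eq_normSq]; nlinarith [norm_nonneg a]
    have hb' : normSq b ≤ 1 := by rw [← norm_mul_self_eq_normSq]; nlinarith [norm_nonneg b]
    nlinarith
  rw [pseudoDist_eq]
  refine div_le_one_of_le₀ ?_ (norm_nonneg _)
  rw [norm_def, norm_def]
  exact Real.sqrt_le_sqrt hnormSq

theorem pseudoDist_mul_mul (l a b : ℂ) :
    pseudoDist (l * a) (l * b) = ‖l‖ * ‖a - b‖ / ‖1 - ((‖l‖ ^ 2 : ℝ) : ℂ) * (conj a * b)‖ := by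
  have hconj : conj (l * a) * (l * b) = ((‖l‖ ^ 2 : ℝ) : ℂ) * (conj a * b) := by
    rw [Complex.sq_norm, normSq_eq_conj_mul_self, map_mul]
    ring
  rw [pseudoDist_eq, hconj, ← mul_sub, norm_mul]

theorem norm_one_sub_le_two_mul_norm_one_sub_mul {w : ℂ} {r : ℝ} (hr : 0 ≤ r) (hw : ‖w‖ ≤ 1)
    (hrw : (2 * r - 1) * ‖w‖ ≤ 1) : ‖1 - w‖ ≤ 2 * ‖1 - r * w‖ := by
  have hlower : 1 - r * ‖w‖ ≤ ‖1 - r * w‖ := by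
    simpa [norm_mul, abs_of_nonneg hr] using norm_sub_norm_le (1 : ℂ) (r * w)
  have hdefect : |r - 1| * ‖w‖ ≤ 1 - r * ‖w‖ := by
    rcases le_total r 1 with h | h
    · rw [abs_of_nonpos (by linarith)]; nlinarith
    · rw [abs_of_nonneg (by linarith)]; linarith
  calc ‖1 - w‖ ≤ ‖1 - r * w‖ + ‖r * w - w‖ := norm_sub_le_norm_sub_add_norm_sub _ _ _
    _ = ‖1 - r * w‖ + |r - 1| * ‖w‖ := by
      rw [← sub_one_mul, norm_mul, ← ofReal_one, ← ofReal_sub, norm_real, Real.norm_eq_abs]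
    _ ≤ 2 * ‖1 - r * w‖ := by linarith

theorem pseudoDist_mul_mul_le {l a b : ℂ} (ha : ‖a‖ < 1) (hb : ‖b‖ < 1)
    (hl : 2 * ‖l‖ * max ‖a‖ ‖b‖ ≤ 1 + max ‖a‖ ‖b‖) :
    pseudoDist (l * a) (l * b) ≤ 2 * ‖l‖ * pseudoDist a b := by
  set m := max ‖a‖ ‖b‖
  have hm0 : 0 ≤ m := (norm_nonneg a).trans (le_max_left _ _)
  have hw : ‖conj a * b‖ ≤ m * m := by
    rw [norm_mul, RCLike.norm_conj]
    exact mul_le_mul (le_max_left _ _) (le_max_right _ _) (norm_nonneg b) hm0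
  have hw1 : ‖conj a * b‖ < 1 := hw.trans_lt (by nlinarith [max_lt ha hb])
  have hsq : (2 * ‖l‖ * m) ^ 2 ≤ (1 + m) ^ 2 := pow_le_pow_left₀ (by positivity) hl 2
  have hden : ‖1 - conj a * b‖ ≤ 2 * ‖1 - ((‖l‖ ^ 2 : ℝ) : ℂ) * (conj a * b)‖ := by
    refine norm_one_sub_le_two_mul_norm_one_sub_mul (by positivity) hw1.le ?_
    rcases le_total (2 * ‖l‖ ^ 2 - 1) 0 with h | h
    · nlinarith [norm_nonneg (conj a * b)]
    · nlinarith [mul_le_mul_of_nonneg_left hw h, sq_nonneg (1 - m)]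
  have hpos : 0 < ‖1 - conj a * b‖ / 2 := by
    have := norm_sub_norm_le (1 : ℂ) (conj a * b)
    rw [norm_one] at this
    linarith
  rw [pseudoDist_mul_mul, pseudoDist_eq, mul_div_assoc]
  calc ‖l‖ * (‖a - b‖ / ‖1 - ((‖l‖ ^ 2 : ℝ) : ℂ) * (conj a * b)‖)
      ≤ ‖l‖ * (‖a - b‖ / (‖1 - conj a * b‖ / 2)) :=
        mul_le_mul_of_nonneg_left
          (div_le_div_of_nonneg_left (norm_nonneg _) hpos (by linarith)) (norm_nonneg l)
    _ = 2 * ‖l‖ * (‖a - b‖ / ‖1 - conj a * b‖) := by rw [div_div_eq_mul_div]; ring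

theorem iSup_pseudoDist_mul_mul_le {ι : Type*} (f g : ι → ℂ) {M : ℝ} {l : ℂ}
    (hf : ∀ t, ‖f t‖ ≤ M) (hg : ∀ t, ‖g t‖ ≤ M) (hM : M < 1) (hl : 2 * ‖l‖ * M ≤ 1 + M) :
    ⨆ t, pseudoDist (l * f t) (l * g t) ≤ 2 * ‖l‖ * ⨆ t, pseudoDist (f t) (g t) := by
  have hbdd : BddAbove (Set.range fun t => pseudoDist (f t) (g t)) :=
    ⟨1, by rintro _ ⟨t, rfl⟩; exact pseudoDist_le_one (by linarith [hf t]) (by linarith [hg t])⟩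
  refine Real.iSup_le (fun t => ?_)
    (by positivity [Real.iSup_nonneg fun t => pseudoDist_nonneg (f t) (g t)])
  -- `2 ‖l‖ m - m` is monotone in `m` when `2 ‖l‖ ≥ 1`, and at most `m` otherwise
  have hlt : 2 * ‖l‖ * max ‖f t‖ ‖g t‖ ≤ 1 + max ‖f t‖ ‖g t‖ := by
    have hmM : max ‖f t‖ ‖g t‖ ≤ M := max_le (hf t) (hg t)
    have hm0 : 0 ≤ max ‖f t‖ ‖g t‖ := (norm_nonneg _).trans (le_max_left _ _)
    rcases le_total (2 * ‖l‖) 1 with h | h <;> nlinarith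
  calc pseudoDist (l * f t) (l * g t) ≤ 2 * ‖l‖ * pseudoDist (f t) (g t) :=
        pseudoDist_mul_mul_le ((hf t).trans_lt hM) ((hg t).trans_lt hM) hlt
    _ ≤ 2 * ‖l‖ * ⨆ t, pseudoDist (f t) (g t) := by gcongr; exact le_ciSup hbdd t

theorem stmt18_general {S : Type*} [TopologicalSpace S]
    (x y : ZeroAtInftyContinuousMap S ℂ) (hx : ‖x‖ < 1) (hy : ‖y‖ < 1)
    (z : ℂ)
    (hz : ‖z‖ ≤ (1 + max ‖x‖ ‖y‖) / (2 * max ‖x‖ ‖y‖)) :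
    ‖z • x‖ < 1 ∧ ‖z • y‖ < 1 ∧
      (⨆ t : S, pseudoDist ((z • x) t) ((z • y) t)) ≤
        2 * ‖z‖ * ⨆ t : S, pseudoDist (x t) (y t) := by
  set M := max ‖x‖ ‖y‖
  have hM : M < 1 := max_lt hx hy
  have hzM : 2 * ‖z‖ * M ≤ 1 + M := by
    rcases ((norm_nonneg x).trans (le_max_left _ _) : 0 ≤ M).eq_or_lt with h | h
    · rw [← h]; norm_num
    · rw [le_div_iff₀ (by positivity)] at hz; linarith
  have hzM' : ‖z‖ * M < 1 := by nlinarith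
  refine ⟨?_, ?_, iSup_pseudoDist_mul_mul_le x y (fun t => (x.norm_apply_le t).trans
    (le_max_left _ _)) (fun t => (y.norm_apply_le t).trans (le_max_right _ _)) hM hzM⟩
  · rw [norm_smul]
    exact (mul_le_mul_of_nonneg_left (le_max_left _ _) (norm_nonneg z)).trans_lt hzM'
  · rw [norm_smul]
    exact (mul_le_mul_of_nonneg_left (le_max_right _ _) (norm_nonneg z)).trans_lt hzM'

theorem stmt18 {S : Type*} [TopologicalSpace S] [LocallyCompactSpace S] [T2Space S]
    (x y : ZeroAtInftyContinuousMap S ℂ) (hx : ‖x‖ < 1) (hy : ‖y‖ < 1)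
    (hmax : 0 < max ‖x‖ ‖y‖) (z : ℂ)
    (hz : ‖z‖ ≤ (1 + max ‖x‖ ‖y‖) / (2 * max ‖x‖ ‖y‖)) :
    ‖z • x‖ < 1 ∧ ‖z • y‖ < 1 ∧
      (⨆ t : S, pseudoDist ((z • x) t) ((z • y) t)) ≤
        2 * ‖z‖ * ⨆ t : S, pseudoDist (x t) (y t) :=
  stmt18_general x y hx hy z hz
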